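/- For 1 < r < √2, every ε ∈ (0,1) and n ≥ ln(4)/ε, there exist D and two measures μ, μ' on ℝ^D such that for any measurable f : (ℝ^D)^n → ℝ there is μ'' ∈ {μ, μ'} with E_{X~(μ'')^n}[(f(X) − M(μ'',n,r))²] ≥ (1−ε)²/16, where M(ν,n,r) is the expected missing mass of ν. In particular no estimator of the expected missing mass has uniformly small L2 error. -/

import Mathlib

/-!
Take `μ'` uniform on an orthonormal family `e₁, …, e_D` and `μ = q μ' + (1 - q) δ₀` with
`q ^ n = 1/4`. As `1 < r < √2`, the closed `r`-ball about `eⱼ` contains `0` and no other `eₖ`, so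
`M(μ') = (1 - 1/D)^n ≥ 1 - ε` once `D ≥ n/ε`, while `M(μ) = q^(n+1) (1 - 1/D)^n ≤ M(μ')/4`.
Restricting `μ^n` to samples avoiding `0` gives `μ'^n ≤ 4 μ^n`. If an estimator `f` had
mean-square error below `s²` under both laws, then by Jensen its `μ'^n`-mean would lie within `s`
of `M(μ')` and, through the domination, within `2s` of `M(μ)`; hence `M(μ') - M(μ) < 3s`, which
fails for `s = (1 - ε)/4`.
-/

open MeasureTheory Metric Finset
open scoped NNReal ENNReal

noncomputable def missingMass {α : Type*} [MeasurableSpace α] [PseudoMetricSpace α]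
    (ν : Measure α) (n : ℕ) (r : ℝ) : ℝ :=
  ∫ y : Fin n → α, (ν (⋂ i, (closedBall (y i) r)ᶜ)).toReal ∂(Measure.pi fun _ => ν)

section AtomicMeasure

variable {α ι κ : Type*} [MeasurableSpace α] [MeasurableSingletonClass α] [Fintype ι] [Fintype κ]

noncomputable def atomicMeasure (w : ι → ℝ≥0) (p : ι → α) : Measure α :=
  ∑ k, (w k : ℝ≥0∞) • Measure.dirac (p k)

open scoped Classical in
lemma atomicMeasure_apply (w : ι → ℝ≥0) (p : ι → α) (A : Set α) :
    atomicMeasure w p A = ∑ k, if p k ∈ A then (w k : ℝ≥0∞) else 0 := by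
  simp only [atomicMeasure, Measure.finsetSum_apply, Measure.smul_apply, Measure.dirac_apply,
    smul_eq_mul, Set.indicator_apply, Pi.one_apply, mul_ite, mul_one, mul_zero]

open scoped Classical in
lemma atomicMeasure_toReal_apply (w : ι → ℝ≥0) (p : ι → α) (A : Set α) :
    (atomicMeasure w p A).toReal = ∑ k, if p k ∈ A then (w k : ℝ) else 0 := by
  rw [atomicMeasure_apply, ENNReal.toReal_sum fun k _ => by split_ifs <;> simp]
  exact sum_congr rfl fun k _ => by split_ifs <;> simp

lemma isProbabilityMeasure_atomicMeasure {w : ι → ℝ≥0} (hw : ∑ k, w k = 1) (p : ι → α) :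
    IsProbabilityMeasure (atomicMeasure w p) :=
  ⟨by simp [atomicMeasure_apply, ← ENNReal.ofNNReal_finsetSum, hw]⟩

instance (w : ι → ℝ≥0) (p : ι → α) : IsFiniteMeasure (atomicMeasure w p) :=
  ⟨by simp [atomicMeasure_apply, ENNReal.sum_lt_top]⟩

lemma integrable_atomicMeasure (w : ι → ℝ≥0) (p : ι → α) (g : α → ℝ) :
    Integrable g (atomicMeasure w p) :=
  integrable_finsetSum_measure.2 fun k _ =>
    (integrable_dirac (by simp)).smul_measure ENNReal.coe_ne_top

lemma memLp_two_atomicMeasure (w : ι → ℝ≥0) (p : ι → α) (g : α → ℝ) :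
    MemLp g 2 (atomicMeasure w p) :=
  (memLp_two_iff_integrable_sq (integrable_atomicMeasure w p g).1).2
    (integrable_atomicMeasure w p _)

lemma integral_atomicMeasure (w : ι → ℝ≥0) (p : ι → α) (g : α → ℝ) :
    ∫ x, g x ∂atomicMeasure w p = ∑ k, (w k : ℝ) * g (p k) := by
  rw [atomicMeasure, integral_finsetSum_measure fun k _ =>
    (integrable_dirac (by simp)).smul_measure ENNReal.coe_ne_top]
  simp [NNReal.smul_def]

lemma pi_atomicMeasure {η : Type*} [Fintype η] [DecidableEq η] (w : ι → ℝ≥0) (p : ι → α) :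
    Measure.pi (fun _ : η => atomicMeasure w p)
      = atomicMeasure (fun t : η → ι => ∏ i, w (t i)) (fun t i => p (t i)) := by
  refine Measure.pi_eq fun s _ => ?_
  classical
  simp only [atomicMeasure_apply, Fintype.prod_sum, Fintype.prod_ite_zero, Set.mem_univ_pi,
    ENNReal.ofNNReal_finsetProd]

lemma memLp_two_pi_atomicMeasure {η : Type*} [Fintype η] [DecidableEq η] (w : ι → ℝ≥0)
    (p : ι → α) (g : (η → α) → ℝ) : MemLp g 2 (Measure.pi fun _ : η => atomicMeasure w p) := by
  rw [pi_atomicMeasure]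
  exact memLp_two_atomicMeasure _ _ g

open scoped Classical in
lemma atomicMeasure_comp_le {w : ι → ℝ≥0} {v : κ → ℝ≥0} {σ : ι → κ} (hσ : σ.Injective)
    {c : ℝ≥0} (hwv : ∀ i, c * w i ≤ v (σ i)) (p : κ → α) :
    (c : ℝ≥0∞) • atomicMeasure w (p ∘ σ) ≤ atomicMeasure v p := by
  intro A
  simp only [Measure.smul_apply, atomicMeasure_apply, smul_eq_mul, mul_sum, Function.comp_apply]
  calc ∑ i, (c : ℝ≥0∞) * (if p (σ i) ∈ A then (w i : ℝ≥0∞) else 0)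
      ≤ ∑ i, if p (σ i) ∈ A then (v (σ i) : ℝ≥0∞) else 0 := by
        gcongr with i
        split_ifs
        · exact_mod_cast hwv i
        · simp
    _ = ∑ k ∈ univ.map ⟨σ, hσ⟩, if p k ∈ A then (v k : ℝ≥0∞) else 0 := by
        rw [sum_map]; rfl
    _ ≤ ∑ k, if p k ∈ A then (v k : ℝ≥0∞) else 0 := sum_le_sum_of_subset (subset_univ _)

end AtomicMeasure

open scoped Classical in
lemma missingMass_atomicMeasure {α ι : Type*} [MeasurableSpace α] [MeasurableSingletonClass α]
    [PseudoMetricSpace α] [Fintype ι] (w : ι → ℝ≥0) (p : ι → α) (n : ℕ) (r : ℝ) :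
    missingMass (atomicMeasure w p) n r
      = ∑ k, (w k : ℝ) * (atomicMeasure w p (closedBall (p k) r)ᶜ).toReal ^ n := by
  have hfar : ∀ k, (atomicMeasure w p (closedBall (p k) r)ᶜ).toReal
      = ∑ j, (w j : ℝ) * if p k ∈ (closedBall (p j) r)ᶜ then 1 else 0 := fun k => by
    simp only [atomicMeasure_toReal_apply, Set.mem_compl_iff, mem_closedBall_comm (x := p k),
      mul_ite, mul_one, mul_zero]
  calc missingMass (atomicMeasure w p) n r
      = ∑ t : Fin n → ι, (∏ i, (w (t i) : ℝ)) * ∑ k, (w k : ℝ) *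
          ∏ i, if p k ∈ (closedBall (p (t i)) r)ᶜ then 1 else 0 := by
        rw [missingMass, pi_atomicMeasure, integral_atomicMeasure]
        simp only [atomicMeasure_toReal_apply, Set.mem_iInter, Fintype.prod_boole, mul_ite,
          mul_one, mul_zero, NNReal.coe_prod]
    _ = ∑ k, (w k : ℝ) * ∑ t : Fin n → ι, ∏ i,
          (w (t i) : ℝ) * if p k ∈ (closedBall (p (t i)) r)ᶜ then 1 else 0 := by
        simp only [mul_sum, prod_mul_distrib]
        rw [sum_comm]
        exact sum_congr rfl fun k _ => sum_congr rfl fun t _ => by ring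
    _ = _ := by simp only [hfar, Fintype.sum_pow]

section Orthonormal

variable {E ι : Type*} [NormedAddCommGroup E] [InnerProductSpace ℝ E] {v : ι → E}

lemma Orthonormal.dist_eq_sqrt_two (hv : Orthonormal ℝ v) {i j : ι} (hij : i ≠ j) :
    dist (v i) (v j) = √2 := by
  rw [dist_eq_norm, ← Real.sqrt_sq (norm_nonneg _), norm_sub_sq_real, hv.1 i, hv.1 j, hv.2 hij]
  norm_num

lemma Orthonormal.mem_closedBall_iff (hv : Orthonormal ℝ v) {r : ℝ} (hr0 : 0 ≤ r) (hr : r < √2)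
    {i j : ι} : v i ∈ closedBall (v j) r ↔ i = j := by
  refine ⟨fun h => by_contra fun hij => ?_, fun h => h ▸ mem_closedBall_self hr0⟩
  rw [mem_closedBall, hv.dist_eq_sqrt_two hij] at h
  linarith

lemma Orthonormal.mem_closedBall_zero (hv : Orthonormal ℝ v) {r : ℝ} (hr : 1 ≤ r) (i : ι) :
    v i ∈ closedBall 0 r := by
  rwa [mem_closedBall, dist_zero_right, hv.1 i]

end Orthonormal

lemma sum_ite_not_eq_const {ι : Type*} [Fintype ι] [DecidableEq ι] [Nonempty ι] (k : ι)
    (c : ℝ) : ∑ j, (if ¬j = k then c else 0) = (Fintype.card ι - 1) * c := by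
  rw [sum_ite, sum_const_zero, add_zero, sum_const, filter_ne', card_erase_of_mem (mem_univ k),
    card_univ, nsmul_eq_mul, Nat.cast_sub Fintype.card_pos, Nat.cast_one]

section TwoPointMeasures

variable {α ι : Type*} [MeasurableSpace α] [MeasurableSingletonClass α] [Fintype ι]

noncomputable def uniformAtoms (v : ι → α) : Measure α :=
  atomicMeasure (fun _ => (Fintype.card ι : ℝ≥0)⁻¹) v

noncomputable def mixtureWithOrigin [Zero α] (q : ℝ≥0) (v : ι → α) : Measure α :=
  atomicMeasure (fun o : Option ι => o.elim (1 - q) fun _ => q / Fintype.card ι)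
    (fun o => o.elim 0 v)

lemma sum_const_card_inv [Nonempty ι] : ∑ _ : ι, (Fintype.card ι : ℝ≥0)⁻¹ = 1 := by
  simp [Fintype.card_ne_zero]

instance [Nonempty ι] (v : ι → α) : IsProbabilityMeasure (uniformAtoms v) :=
  isProbabilityMeasure_atomicMeasure sum_const_card_inv v

lemma isProbabilityMeasure_mixtureWithOrigin [Zero α] [Nonempty ι] {q : ℝ≥0} (hq : q ≤ 1)
    (v : ι → α) : IsProbabilityMeasure (mixtureWithOrigin q v) := by
  refine isProbabilityMeasure_atomicMeasure ?_ _
  simp [Fintype.sum_option, div_eq_mul_inv, mul_left_comm _ q, Fintype.card_ne_zero,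
    tsub_add_cancel_of_le hq]

lemma pi_uniformAtoms_le_smul_pi_mixtureWithOrigin [Zero α] {q c : ℝ≥0} {n : ℕ}
    (hc : c * q ^ n = 1) (v : ι → α) :
    Measure.pi (fun _ : Fin n => uniformAtoms v)
      ≤ (c : ℝ≥0∞) • Measure.pi (fun _ : Fin n => mixtureWithOrigin q v) := by
  have hσ : (fun (t : Fin n → ι) (i : Fin n) => (some (t i) : Option ι)).Injective :=
    fun t u h => funext fun i => Option.some_injective _ (congrFun h i)
  have hle : ((q ^ n : ℝ≥0) : ℝ≥0∞) • Measure.pi (fun _ : Fin n => uniformAtoms v)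
      ≤ Measure.pi (fun _ : Fin n => mixtureWithOrigin q v) := by
    rw [uniformAtoms, mixtureWithOrigin, pi_atomicMeasure, pi_atomicMeasure]
    refine atomicMeasure_comp_le hσ (c := q ^ n)
      (w := fun t : Fin n → ι => ∏ i, (Fintype.card ι : ℝ≥0)⁻¹)
      (v := fun t : Fin n → Option ι => ∏ i, (t i).elim (1 - q) fun _ => q / Fintype.card ι)
      (fun t => le_of_eq ?_) (fun (t : Fin n → Option ι) i => (t i).elim 0 v)
    simp [div_eq_mul_inv, mul_pow]
  calc Measure.pi (fun _ : Fin n => uniformAtoms v)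
      = (c : ℝ≥0∞) • ((q ^ n : ℝ≥0) : ℝ≥0∞) • Measure.pi (fun _ => uniformAtoms v) := by
        rw [smul_smul, ← ENNReal.coe_mul, hc, ENNReal.coe_one, one_smul]
    _ ≤ _ := by gcongr

end TwoPointMeasures

section OrthonormalAtoms

variable {E ι : Type*} [NormedAddCommGroup E] [InnerProductSpace ℝ E] [MeasurableSpace E]
  [MeasurableSingletonClass E] [Fintype ι] {v : ι → E} {r : ℝ}

lemma mixtureWithOrigin_compl_closedBall_zero (hv : Orthonormal ℝ v) (hr1 : 1 ≤ r) (q : ℝ≥0) :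
    (mixtureWithOrigin q v (closedBall 0 r)ᶜ).toReal = 0 := by
  classical
  simp only [mixtureWithOrigin, atomicMeasure_toReal_apply, Fintype.sum_option, Option.elim,
    Set.mem_compl_iff, mem_closedBall_self (zero_le_one.trans hr1), hv.mem_closedBall_zero hr1,
    not_true_eq_false, if_false, sum_const_zero, add_zero]

variable [Nonempty ι]

lemma uniformAtoms_compl_closedBall (hv : Orthonormal ℝ v) (hr0 : 0 ≤ r) (hr : r < √2) (k : ι) :
    (uniformAtoms v (closedBall (v k) r)ᶜ).toReal = 1 - (Fintype.card ι : ℝ)⁻¹ := by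
  classical
  have hN : (Fintype.card ι : ℝ) ≠ 0 := Nat.cast_ne_zero.2 Fintype.card_ne_zero
  simp only [uniformAtoms, atomicMeasure_toReal_apply, Set.mem_compl_iff,
    hv.mem_closedBall_iff hr0 hr, NNReal.coe_inv, NNReal.coe_natCast]
  rw [sum_ite_not_eq_const]
  field_simp

lemma mixtureWithOrigin_compl_closedBall (hv : Orthonormal ℝ v) (hr1 : 1 ≤ r) (hr : r < √2)
    (q : ℝ≥0) (k : ι) :
    (mixtureWithOrigin q v (closedBall (v k) r)ᶜ).toReal = q * (1 - (Fintype.card ι : ℝ)⁻¹) := by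
  classical
  have hN : (Fintype.card ι : ℝ) ≠ 0 := Nat.cast_ne_zero.2 Fintype.card_ne_zero
  simp only [mixtureWithOrigin, atomicMeasure_toReal_apply, Fintype.sum_option, Option.elim,
    Set.mem_compl_iff, hv.mem_closedBall_iff (zero_le_one.trans hr1) hr,
    mem_closedBall_comm.1 (hv.mem_closedBall_zero hr1 k), not_true_eq_false, if_false, zero_add,
    NNReal.coe_div, NNReal.coe_natCast]
  rw [sum_ite_not_eq_const]
  field_simp

lemma missingMass_uniformAtoms (hv : Orthonormal ℝ v) (hr0 : 0 ≤ r) (hr : r < √2) (n : ℕ) :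
    missingMass (uniformAtoms v) n r = (1 - (Fintype.card ι : ℝ)⁻¹) ^ n := by
  have hN : (Fintype.card ι : ℝ) ≠ 0 := Nat.cast_ne_zero.2 Fintype.card_ne_zero
  rw [uniformAtoms, missingMass_atomicMeasure, ← uniformAtoms]
  simp only [uniformAtoms_compl_closedBall hv hr0 hr, sum_const, card_univ, nsmul_eq_mul,
    NNReal.coe_inv, NNReal.coe_natCast, ← mul_assoc, mul_inv_cancel₀ hN, one_mul]

lemma missingMass_mixtureWithOrigin (hv : Orthonormal ℝ v) (hr1 : 1 ≤ r) (hr : r < √2)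
    (q : ℝ≥0) {n : ℕ} (hn : n ≠ 0) :
    missingMass (mixtureWithOrigin q v) n r = q ^ (n + 1) * (1 - (Fintype.card ι : ℝ)⁻¹) ^ n := by
  have hN : (Fintype.card ι : ℝ) ≠ 0 := Nat.cast_ne_zero.2 Fintype.card_ne_zero
  rw [mixtureWithOrigin, missingMass_atomicMeasure, ← mixtureWithOrigin, Fintype.sum_option]
  simp only [Option.elim, mixtureWithOrigin_compl_closedBall_zero hv hr1,
    mixtureWithOrigin_compl_closedBall hv hr1 hr, zero_pow hn, mul_zero, zero_add, sum_const,
    card_univ, nsmul_eq_mul, NNReal.coe_div, NNReal.coe_natCast]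
  rw [← mul_assoc, mul_div_cancel₀ _ hN, mul_pow, pow_succ']
  ring

end OrthonormalAtoms

section TwoPoint

variable {Ω : Type*} [MeasurableSpace Ω]

lemma sq_integral_sub_le_integral_sq_sub {P : Measure Ω} [IsProbabilityMeasure P] {f : Ω → ℝ}
    (hf : MemLp f 2 P) (c : ℝ) : (∫ x, f x ∂P - c) ^ 2 ≤ ∫ x, (f x - c) ^ 2 ∂P := by
  have hfc : MemLp (fun x => f x - c) 2 P := hf.sub (memLp_const c)
  have := ProbabilityTheory.variance_nonneg (fun x => f x - c) P
  rw [ProbabilityTheory.variance_eq_sub hfc, integral_sub (hf.integrable one_le_two)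
    (integrable_const c), integral_const, probReal_univ, one_smul] at this
  simpa using this

lemma integral_le_of_le_smul {P P' : Measure Ω} {c : ℝ≥0} (hP : P' ≤ (c : ℝ≥0∞) • P)
    {g : Ω → ℝ} (hg0 : 0 ≤ g) (hg : Integrable g P) : ∫ x, g x ∂P' ≤ c * ∫ x, g x ∂P := by
  calc ∫ x, g x ∂P' ≤ ∫ x, g x ∂((c : ℝ≥0∞) • P) :=
        integral_mono_measure hP (Filter.Eventually.of_forall hg0)
          (hg.smul_measure ENNReal.coe_ne_top)
    _ = c * ∫ x, g x ∂P := by simp [NNReal.smul_def]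

lemma two_point_lower_bound {P P' : Measure Ω} [IsFiniteMeasure P] [IsProbabilityMeasure P']
    {k : ℝ≥0} (hP : P' ≤ ((k ^ 2 : ℝ≥0) : ℝ≥0∞) • P) {f : Ω → ℝ} (hf : MemLp f 2 P) {M M' s : ℝ}
    (hs : 0 ≤ s) (hgap : (1 + k) * s ≤ M' - M) :
    s ^ 2 ≤ ∫ x, (f x - M) ^ 2 ∂P ∨ s ^ 2 ≤ ∫ x, (f x - M') ^ 2 ∂P' := by
  by_contra! h
  obtain ⟨hM, hM'⟩ := h
  have hf' : MemLp f 2 P' := hf.of_measure_le_smul ENNReal.coe_ne_top hP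
  have hb' : |∫ x, f x ∂P' - M'| < s :=
    abs_lt_of_sq_lt_sq ((sq_integral_sub_le_integral_sq_sub hf' M').trans_lt hM') hs
  have hb : |∫ x, f x ∂P' - M| ≤ k * s := by
    refine abs_le_of_sq_le_sq ?_ (by positivity)
    calc (∫ x, f x ∂P' - M) ^ 2 ≤ ∫ x, (f x - M) ^ 2 ∂P' := sq_integral_sub_le_integral_sq_sub hf' M
      _ ≤ (k ^ 2 : ℝ≥0) * ∫ x, (f x - M) ^ 2 ∂P :=
        integral_le_of_le_smul hP (fun x => sq_nonneg _) ((hf.sub (memLp_const M)).integrable_sq)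
      _ ≤ (k * s) ^ 2 := by
        rw [mul_pow, NNReal.coe_pow]
        exact mul_le_mul_of_nonneg_left hM.le (by positivity)
  have := abs_lt.1 hb'
  have := abs_le.1 hb
  nlinarith

end TwoPoint

lemma exists_one_sub_le_one_sub_inv_pow {ε : ℝ} (hε : 0 < ε) (n : ℕ) :
    ∃ D : ℕ, 0 < D ∧ 1 - ε ≤ (1 - (D : ℝ)⁻¹) ^ n := by
  obtain ⟨D, hD⟩ := exists_nat_gt (n / ε)
  have hD0 : (0 : ℝ) < D := (div_nonneg n.cast_nonneg hε.le).trans_lt hD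
  refine ⟨D, Nat.cast_pos.1 hD0, ?_⟩
  have hnD : n * (D : ℝ)⁻¹ ≤ ε := by
    rw [← div_eq_mul_inv, div_le_iff₀ hD0]
    rw [div_lt_iff₀ hε] at hD
    linarith
  calc 1 - ε ≤ 1 + n * (-(D : ℝ)⁻¹) := by linarith
    _ ≤ (1 - (D : ℝ)⁻¹) ^ n := by
      have hD1 : (D : ℝ)⁻¹ ≤ 1 := inv_le_one_of_one_le₀ (Nat.one_le_cast.2 (Nat.cast_pos.1 hD0))
      simpa [sub_eq_add_neg] using one_add_mul_le_pow (a := -(D : ℝ)⁻¹) (by linarith) n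

/-- No estimator of the expected missing mass has uniformly small L2 error:
for `1 < r < √2`, `ε ∈ (0,1)` and `n ≥ ln 4 / ε` there exist a dimension `D` and
probability measures `μ, μ'` on `ℝ^D` such that for every measurable estimator `f`
some `ν ∈ {μ, μ'}` yields `E[(f(X) - M(ν,n,r))²] ≥ (1-ε)²/16`. -/
theorem stmt12 (r ε : ℝ) (hr1 : 1 < r) (hr2 : r < Real.sqrt 2)
    (hε0 : 0 < ε) (hε1 : ε < 1) (n : ℕ) (hn : Real.log 4 / ε ≤ n) :
    ∃ (D : ℕ) (μ μ' : Measure (EuclideanSpace ℝ (Fin D))),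
      IsProbabilityMeasure μ ∧ IsProbabilityMeasure μ' ∧
      ∀ f : (Fin n → EuclideanSpace ℝ (Fin D)) → ℝ, Measurable f →
        ∃ ν : Measure (EuclideanSpace ℝ (Fin D)), (ν = μ ∨ ν = μ') ∧
          (∫ x : Fin n → EuclideanSpace ℝ (Fin D),
              (f x - ∫ y : Fin n → EuclideanSpace ℝ (Fin D),
                  (ν (⋂ i, (closedBall (y i) r)ᶜ)).toReal ∂(Measure.pi fun _ => ν)) ^ 2
              ∂(Measure.pi fun _ => ν)) ≥ (1 - ε) ^ 2 / 16 := by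
  have hn0 : n ≠ 0 := by
    rintro rfl
    exact (div_pos (Real.log_pos (by norm_num : (1 : ℝ) < 4)) hε0).not_ge (by simpa using hn)
  obtain ⟨D, hD, hm⟩ := exists_one_sub_le_one_sub_inv_pow hε0 n
  have : Nonempty (Fin D) := ⟨⟨0, hD⟩⟩
  obtain ⟨q, hq1, hqn⟩ : ∃ q : ℝ≥0, q ≤ 1 ∧ q ^ n = 4⁻¹ :=
    ⟨_, NNReal.rpow_le_one (inv_le_one_of_one_le₀ (by norm_num)) (by positivity),
      NNReal.rpow_inv_natCast_pow _ hn0⟩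
  set v : Fin D → EuclideanSpace ℝ (Fin D) := fun j => EuclideanSpace.single j 1
  have hv : Orthonormal ℝ v := EuclideanSpace.orthonormal_single
  have := isProbabilityMeasure_mixtureWithOrigin hq1 v
  refine ⟨D, mixtureWithOrigin q v, uniformAtoms v, inferInstance, inferInstance, fun f _ => ?_⟩
  have hP := pi_uniformAtoms_le_smul_pi_mixtureWithOrigin (c := 2 ^ 2) (n := n)
    (by rw [hqn]; norm_num) v
  have hgap : (1 + 2) * ((1 - ε) / 4)
      ≤ missingMass (uniformAtoms v) n r - missingMass (mixtureWithOrigin q v) n r := by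
    rw [missingMass_uniformAtoms hv (by linarith) hr2,
      missingMass_mixtureWithOrigin hv hr1.le hr2 q hn0, pow_succ', ← NNReal.coe_pow, hqn,
      Fintype.card_fin]
    have hqm : (q : ℝ) * (1 - (D : ℝ)⁻¹) ^ n ≤ (1 - (D : ℝ)⁻¹) ^ n :=
      mul_le_of_le_one_left (by linarith) hq1
    push_cast
    linarith
  have hsq : ((1 - ε) / 4) ^ 2 = (1 - ε) ^ 2 / 16 := by ring
  rcases two_point_lower_bound hP (memLp_two_pi_atomicMeasure _ _ f) (by linarith) hgap
    with h | h
  · exact ⟨_, Or.inl rfl, by rw [ge_iff_le, ← hsq]; exact h⟩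
  · exact ⟨_, Or.inr rfl, by rw [ge_iff_le, ← hsq]; exact h⟩
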